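/- arXiv:1904.10850 — 2 statements merged into one kernel-verified Lean document; each statement's English description precedes it below -/
import Mathlib

section
/- For every positive integer z, there exists a set of z cells of the integer grid whose span is strictly smaller than 2*sqrt(z); that is, the span of a nest of size z is smaller than 2*sqrt(z). -/
/-- Manhattan distance between two cells of the integer grid. -/
def mdist (p q : ℤ × ℤ) : ℕ := (p.1 - q.1).natAbs + (p.2 - q.2).natAbs

/-- The disc of radius `r` centered at `c`: all cells at Manhattan distance at most `r`. -/
noncomputable def disc (r : ℕ) (c : ℤ × ℤ) : Finset (ℤ × ℤ) :=
  (Finset.Icc (c.1 - r, c.2 - r) (c.1 + r, c.2 + r)).filter (fun p => mdist p c ≤ r)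

/-- The span of a finite set of cells: the maximum Manhattan distance between two of
its cells (`0` if the set has at most one cell). -/
def span (S : Finset (ℤ × ℤ)) : ℕ := (S ×ˢ S).sup fun pq => mdist pq.1 pq.2

/-!
With `m = ⌊√(z - 1)⌋` we have `m² < z ≤ (m + 1)²`, so `z` cells fit into the
`(m + 1) × (m + 1)` square, whose span is `2m < 2√z`.
-/

lemma span_le_iff {S : Finset (ℤ × ℤ)} {d : ℕ} :
    span S ≤ d ↔ ∀ p ∈ S, ∀ q ∈ S, mdist p q ≤ d := by
  simp only [span, Finset.sup_le_iff, Finset.mem_product]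
  exact ⟨fun h p hp q hq => h (p, q) ⟨hp, hq⟩, fun h pq hpq => h _ hpq.1 _ hpq.2⟩

lemma span_mono {S T : Finset (ℤ × ℤ)} (h : S ⊆ T) : span S ≤ span T :=
  Finset.sup_mono (Finset.product_subset_product h h)

noncomputable def square (m : ℕ) : Finset (ℤ × ℤ) := Finset.Icc (0, 0) (m, m)

lemma card_square (m : ℕ) : (square m).card = (m + 1) ^ 2 := by
  rw [square, Finset.Icc_prod_def, Finset.card_product, Int.card_Icc]
  simp only [sub_zero, Int.toNat_natCast_add_one]
  ring

lemma span_square_le (m : ℕ) : span (square m) ≤ 2 * m := by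
  rw [span_le_iff]
  rintro ⟨p₁, p₂⟩ hp ⟨q₁, q₂⟩ hq
  simp only [square, Finset.mem_Icc, Prod.mk_le_mk] at hp hq
  simp only [mdist]
  omega

/-- For every positive `z` there is a set of `z` cells whose span is smaller than
`2√z`; hence the span of a nest of size `z` is smaller than `2√z`. -/
theorem exists_span_lt_two_sqrt (z : ℕ) (hz : 0 < z) :
    ∃ S : Finset (ℤ × ℤ), S.card = z ∧ (span S : ℝ) < 2 * Real.sqrt z := by
  set m := Nat.sqrt (z - 1)
  have hm_sq_lt : m ^ 2 < z := by
    have : m ^ 2 ≤ z - 1 := Nat.sqrt_le' _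
    omega
  have hz_le : z ≤ (square m).card := by
    have : z - 1 < (m + 1) ^ 2 := Nat.lt_succ_sqrt' _
    rw [card_square]
    omega
  obtain ⟨S, hS, hcard⟩ := Finset.exists_subset_card_eq hz_le
  refine ⟨S, hcard, ?_⟩
  have hm_lt : (m : ℝ) < Real.sqrt z := Real.lt_sqrt_of_sq_lt (by exact_mod_cast hm_sq_lt)
  calc (span S : ℝ) ≤ 2 * m := by exact_mod_cast (span_mono hS).trans (span_square_le m)
    _ < 2 * Real.sqrt z := by linarith
end

section
/- Let s be a natural number and let C be a finite set of cells of the integer grid having maximum cardinality among all finite sets of cells whose span is at most s. If C contains three consecutive cells (x,y), (x+1,y), (x+2,y) of one row, then C also contains both cells (x+1,y+1) and (x+1,y-1); symmetrically, if C contains three consecutive cells (x,y), (x,y+1), (x,y+2) of one column, then C also contains both cells (x+1,y+1) and (x-1,y+1). -/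
/-!
If `C` has maximum size among the sets of span at most `s`, and a cell `p` is, from every
cell, no farther than the farther of two cells `u, v ∈ C`, then `insert p C` still has span
at most `s`, so `p ∈ C` by maximality. The cells beside the middle one of three consecutive
cells `u, m, v` are such cells `p`: in the direction of the triple, `p` is at least one step
closer to any cell than the farther of `u` and `v`, which pays for its unit offset.
-/

lemma mdist_comm (p q : ℤ × ℤ) : mdist p q = mdist q p := by
  unfold mdist
  omega

lemma mdist_le_span {C : Finset (ℤ × ℤ)} {p q : ℤ × ℤ} (hp : p ∈ C) (hq : q ∈ C) :
    mdist p q ≤ span C :=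
  Finset.le_sup (f := fun pq => mdist pq.1 pq.2) (Finset.mk_mem_product hp hq)

lemma span_insert_le {s : ℕ} {C : Finset (ℤ × ℤ)} (hC : span C ≤ s) {p : ℤ × ℤ}
    (hp : ∀ q ∈ C, mdist p q ≤ s) : span (insert p C) ≤ s := by
  apply Finset.sup_le
  rintro ⟨a, b⟩ hab
  simp only [Finset.mem_product, Finset.mem_insert] at hab
  obtain ⟨rfl | ha, rfl | hb⟩ := hab
  · simp [mdist]
  · exact hp b hb
  · exact (mdist_comm _ _).trans_le (hp _ ha)
  · exact (mdist_le_span ha hb).trans hC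

lemma mem_of_mdist_le_max {s : ℕ} {C : Finset (ℤ × ℤ)} (hC : span C ≤ s)
    (hmax : ∀ S : Finset (ℤ × ℤ), span S ≤ s → S.card ≤ C.card)
    {p u v : ℤ × ℤ} (hu : u ∈ C) (hv : v ∈ C)
    (hp : ∀ q, mdist p q ≤ max (mdist u q) (mdist v q)) : p ∈ C := by
  by_contra hpC
  have hspan : span (insert p C) ≤ s :=
    span_insert_le hC fun q hq =>
      (hp q).trans (max_le ((mdist_le_span hu hq).trans hC) ((mdist_le_span hv hq).trans hC))
  have hcard := hmax _ hspan
  rw [Finset.card_insert_of_notMem hpC] at hcard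
  omega

lemma mdist_le_max_of_row (x y e : ℤ) (he : e.natAbs ≤ 1) (q : ℤ × ℤ) :
    mdist (x + 1, y + e) q ≤ max (mdist (x, y) q) (mdist (x + 2, y) q) := by
  unfold mdist
  omega

lemma mdist_le_max_of_column (x y e : ℤ) (he : e.natAbs ≤ 1) (q : ℤ × ℤ) :
    mdist (x + e, y + 1) q ≤ max (mdist (x, y) q) (mdist (x, y + 2) q) := by
  unfold mdist
  omega

/-- In a maximum-cardinality finite set of cells of span at most `s`, three consecutive
cells of a row force the two cells above and below the middle cell to be present, and
symmetrically for columns. -/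
theorem max_card_three_consecutive (s : ℕ) (C : Finset (ℤ × ℤ))
    (hC : span C ≤ s)
    (hmax : ∀ S : Finset (ℤ × ℤ), span S ≤ s → S.card ≤ C.card) :
    (∀ x y : ℤ, (x, y) ∈ C → (x + 1, y) ∈ C → (x + 2, y) ∈ C →
      (x + 1, y + 1) ∈ C ∧ (x + 1, y - 1) ∈ C) ∧
    (∀ x y : ℤ, (x, y) ∈ C → (x, y + 1) ∈ C → (x, y + 2) ∈ C →
      (x + 1, y + 1) ∈ C ∧ (x - 1, y + 1) ∈ C) := by
  refine ⟨fun x y hu _ hv => ⟨?_, ?_⟩, fun x y hu _ hv => ⟨?_, ?_⟩⟩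
  · exact mem_of_mdist_le_max hC hmax hu hv (mdist_le_max_of_row x y 1 le_rfl)
  · simpa [sub_eq_add_neg] using
      mem_of_mdist_le_max hC hmax hu hv (mdist_le_max_of_row x y (-1) le_rfl)
  · simpa [add_comm] using
      mem_of_mdist_le_max hC hmax hu hv (mdist_le_max_of_column x y 1 le_rfl)
  · simpa [sub_eq_add_neg, add_comm] using
      mem_of_mdist_le_max hC hmax hu hv (mdist_le_max_of_column x y (-1) le_rfl)
end
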